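/- Let K be an algebraically closed field, S = K[x_1,…,x_r], and φ : S ↠ A a surjective K-algebra homomorphism onto an integral domain A. Let D = K[ε]/(ε²), and let Φ : S ⊗_K D ↠ 𝒜 be a surjective D-algebra homomorphism such that 𝒜 is flat over D and Φ reduces modulo ε to φ (i.e. there is an isomorphism 𝒜/ε𝒜 ≅ A under which Φ mod ε equals φ). Let B ⊆ 𝒜 be the image of the composite S → S ⊗_K D → 𝒜, let q : B ↠ A be the induced surjection, and let p = ker q, a prime ideal of B. If the induced map of localizations B_p → Frac(A) is an isomorphism, then the deformation is trivial: there exists a K-algebra homomorphism σ : A → 𝒜 splitting the surjection 𝒜 ↠ A with σ ∘ φ = Φ ∘ (inclusion of S into S ⊗_K D), and σ induces a D-algebra isomorphism A ⊗_K D ≅ 𝒜. -/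
import Mathlib


open MvPolynomial TensorProduct

noncomputable section

variable {K : Type} [Field K] (r : ℕ)
variable {𝒜 : Type} [CommRing 𝒜] [Algebra (DualNumber K) 𝒜] [Algebra K 𝒜]
  [IsScalarTower K (DualNumber K) 𝒜]

/-- The composite `S → S ⊗_K D → 𝒜` (with `S ⊗_K D` modeled as polynomials over the
dual numbers `D = K[ε]/(ε²)`), as a `K`-algebra homomorphism. -/
def PhiK (Φ : MvPolynomial (Fin r) (DualNumber K) →ₐ[DualNumber K] 𝒜) :
    MvPolynomial (Fin r) K →ₐ[K] 𝒜 :=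
  (Φ.restrictScalars K).comp (MvPolynomial.mapAlgHom (Algebra.ofId K (DualNumber K)))

/-- The subalgebra `B ⊆ 𝒜`, the image of `S` in `𝒜`. -/
def Bsub (Φ : MvPolynomial (Fin r) (DualNumber K) →ₐ[DualNumber K] 𝒜) :
    Subalgebra K 𝒜 :=
  (PhiK r Φ).range

/-- The induced surjection `q : B ↠ A`. -/
def qmap {A : Type} [CommRing A] [Algebra K A] (π : 𝒜 →ₐ[K] A)
    (Φ : MvPolynomial (Fin r) (DualNumber K) →ₐ[DualNumber K] 𝒜) :
    Bsub r Φ →ₐ[K] A :=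
  π.comp (Bsub r Φ).val

/-- The multiplicative set `B \ p`, where `p = ker q`, i.e. the preimage under `q` of the
nonzerodivisors of the domain `A`. -/
def primeComplSubmonoid {A : Type} [CommRing A] [IsDomain A] [Algebra K A]
    (π : 𝒜 →ₐ[K] A) (Φ : MvPolynomial (Fin r) (DualNumber K) →ₐ[DualNumber K] 𝒜) :
    Submonoid (Bsub r Φ) :=
  (nonZeroDivisors A).comap (qmap r π Φ).toRingHom.toMonoidHom

/-- The induced map `B_p → Frac A` on localizations. -/
def localizedMap {A : Type} [CommRing A] [IsDomain A] [Algebra K A]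
    (π : 𝒜 →ₐ[K] A) (Φ : MvPolynomial (Fin r) (DualNumber K) →ₐ[DualNumber K] 𝒜) :
    Localization (primeComplSubmonoid r π Φ) →+* FractionRing A :=
  IsLocalization.lift (M := primeComplSubmonoid r π Φ)
    (g := (algebraMap A (FractionRing A)).comp (qmap r π Φ).toRingHom)
    (by
      rintro ⟨y, hy⟩
      exact IsLocalization.map_units (FractionRing A) (⟨qmap r π Φ y, hy⟩ : nonZeroDivisors A))

lemma eps_exact' : Function.Exact
    (LinearMap.lsmul (DualNumber K) (DualNumber K) DualNumber.eps)
    (LinearMap.lsmul (DualNumber K) (DualNumber K) DualNumber.eps) := by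
  intro y
  simp only [LinearMap.lsmul_apply, smul_eq_mul]
  constructor
  · intro h
    refine ⟨TrivSqZeroExt.inl y.snd, ?_⟩
    have h1 : y.fst = 0 := by
      have := congrArg TrivSqZeroExt.snd h
      simpa [DualNumber.snd_mul] using this
    ext
    · simp [TrivSqZeroExt.fst_mul, h1]
    · simp [DualNumber.snd_mul]
  · rintro ⟨x, rfl⟩
    simp only [LinearMap.lsmul_apply, smul_eq_mul]
    rw [← mul_assoc, DualNumber.eps_mul_eps, zero_mul]

lemma eps_torsion' {𝒜 : Type} [CommRing 𝒜]
    [Algebra (DualNumber K) 𝒜] [Module.Flat (DualNumber K) 𝒜] (x : 𝒜)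
    (h : (DualNumber.eps : DualNumber K) • x = 0) :
    ∃ y : 𝒜, x = (DualNumber.eps : DualNumber K) • y := by
  set f := LinearMap.lsmul (DualNumber K) (DualNumber K) DualNumber.eps with hf
  have hE : Function.Exact (f.lTensor 𝒜) (f.lTensor 𝒜) :=
    Module.Flat.lTensor_exact 𝒜 eps_exact'
  set e := TensorProduct.rid (DualNumber K) 𝒜 with he
  have key : ∀ z : 𝒜 ⊗[DualNumber K] DualNumber K,
      e (f.lTensor 𝒜 z) = algebraMap (DualNumber K) 𝒜 DualNumber.eps * e z := by
    intro z
    induction z using TensorProduct.induction_on with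
    | zero => rw [LinearMap.map_zero, e.map_zero, mul_zero]
    | tmul a d =>
        rw [LinearMap.lTensor_tmul, he, TensorProduct.rid_tmul, TensorProduct.rid_tmul,
          hf, LinearMap.lsmul_apply, smul_eq_mul, mul_smul, Algebra.smul_def]
    | add a b ha hb =>
        rw [LinearMap.map_add, LinearEquiv.map_add, ha, hb, LinearEquiv.map_add, mul_add]
  have hz : f.lTensor 𝒜 (e.symm x) = 0 := by
    apply e.injective
    rw [key, LinearEquiv.map_zero, LinearEquiv.apply_symm_apply, ← Algebra.smul_def, h]
  obtain ⟨w, hw⟩ := (hE _).mp hz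
  exact ⟨e w, by rw [Algebra.smul_def, ← key, hw, LinearEquiv.apply_symm_apply]⟩

/-- A first-order embedded deformation `Φ : S ⊗_K D ↠ 𝒜` of a presentation
`φ : S ↠ A` of an integral domain, such that the localization `B_p → Frac A` of the image
`B` of `S` in `𝒜` is an isomorphism, is a trivial deformation: the surjection `𝒜 ↠ A`
splits compatibly, and the splitting induces an isomorphism `A ⊗_K D ≅ 𝒜`. -/
theorem trivial_deformation_of_generic_iso {K : Type} [Field K] [IsAlgClosed K] (r : ℕ)
    (A : Type) [CommRing A] [IsDomain A] [Algebra K A]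
    (φ : MvPolynomial (Fin r) K →ₐ[K] A) (hφ : Function.Surjective φ)
    (𝒜 : Type) [CommRing 𝒜] [Algebra (DualNumber K) 𝒜] [Algebra K 𝒜]
    [IsScalarTower K (DualNumber K) 𝒜]
    [Module.Flat (DualNumber K) 𝒜]
    (Φ : MvPolynomial (Fin r) (DualNumber K) →ₐ[DualNumber K] 𝒜)
    (hΦ : Function.Surjective Φ)
    (π : 𝒜 →ₐ[K] A) (hπ : Function.Surjective π)
    (hker : RingHom.ker π.toRingHom =
      Ideal.span {algebraMap (DualNumber K) 𝒜 DualNumber.eps})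
    (hred : π.comp (PhiK r Φ) = φ)
    (hloc : Function.Bijective (localizedMap r π Φ)) :
    ∃ σ : A →ₐ[K] 𝒜,
      π.comp σ = AlgHom.id K A ∧
      σ.comp φ = PhiK r Φ ∧
      Function.Bijective
        (Algebra.TensorProduct.productMap σ
          ((Algebra.ofId (DualNumber K) 𝒜).restrictScalars K)) := by
  classical
  have hπeps : π (algebraMap (DualNumber K) 𝒜 DualNumber.eps) = 0 := by
    have : algebraMap (DualNumber K) 𝒜 DualNumber.eps ∈ RingHom.ker π.toRingHom := by
      rw [hker]; exact Ideal.mem_span_singleton_self _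
    exact this
  have hπsmul : ∀ x : 𝒜, π ((DualNumber.eps : DualNumber K) • x) = 0 := by
    intro x
    rw [Algebra.smul_def, map_mul, hπeps, zero_mul]
  have hker' : ∀ x : 𝒜, π x = 0 → ∃ y, x = (DualNumber.eps : DualNumber K) • y := by
    intro x hx
    have : x ∈ RingHom.ker π.toRingHom := hx
    rw [hker, Ideal.mem_span_singleton] at this
    obtain ⟨y, hy⟩ := this
    exact ⟨y, by rw [Algebra.smul_def]; exact hy⟩
  have hqsurj : Function.Surjective (qmap r π Φ) := by
    intro a
    obtain ⟨f, hf⟩ := hφ a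
    refine ⟨⟨PhiK r Φ f, ⟨f, rfl⟩⟩, ?_⟩
    show π (PhiK r Φ f) = a
    rw [← AlgHom.comp_apply, hred]; exact hf
  have hqinj : Function.Injective (qmap r π Φ) := by
    rw [injective_iff_map_eq_zero]
    intro b hb
    have h1 : localizedMap r π Φ
        (algebraMap (Bsub r Φ) (Localization (primeComplSubmonoid r π Φ)) b) = 0 := by
      rw [localizedMap, IsLocalization.lift_eq]
      show algebraMap A (FractionRing A) (qmap r π Φ b) = 0
      rw [hb, map_zero]
    have h2 : algebraMap (Bsub r Φ) (Localization (primeComplSubmonoid r π Φ)) b = 0 := by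
      apply hloc.1
      rw [h1, map_zero]
    obtain ⟨m, hm⟩ := (IsLocalization.map_eq_zero_iff (primeComplSubmonoid r π Φ)
      (Localization (primeComplSubmonoid r π Φ)) b).mp h2
    have hm' : ((m : Bsub r Φ) : 𝒜) * (b : 𝒜) = 0 := by
      have := congrArg (Subtype.val) hm
      simpa using this
    have hqm : π ((m : Bsub r Φ) : 𝒜) ≠ 0 := by
      have : qmap r π Φ (m : Bsub r Φ) ∈ nonZeroDivisors A := m.2
      exact nonZeroDivisors.ne_zero this
    have hπb : π (b : 𝒜) = 0 := hb
    obtain ⟨a, ha⟩ := hker' _ hπb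
    have h3 : (DualNumber.eps : DualNumber K) • (((m : Bsub r Φ) : 𝒜) * a) = 0 := by
      have h3' : ((m : Bsub r Φ) : 𝒜) * ((DualNumber.eps : DualNumber K) • a) = 0 := by
        rw [← ha]; exact hm'
      rwa [mul_smul_comm] at h3'
    obtain ⟨y, hy⟩ := eps_torsion' _ h3
    have h4 : π (((m : Bsub r Φ) : 𝒜) * a) = 0 := by rw [hy, hπsmul]
    rw [map_mul] at h4
    have hπa : π a = 0 := by
      rcases mul_eq_zero.mp h4 with h | h
      · exact absurd h hqm
      · exact h
    obtain ⟨c, hc⟩ := hker' _ hπa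
    have : (b : 𝒜) = 0 := by
      rw [ha, hc, Algebra.smul_def, Algebra.smul_def, ← mul_assoc, ← map_mul,
        DualNumber.eps_mul_eps, map_zero, zero_mul]
    exact Subtype.ext this
  let eqv : Bsub r Φ ≃ₐ[K] A := AlgEquiv.ofBijective (qmap r π Φ) ⟨hqinj, hqsurj⟩
  let σ : A →ₐ[K] 𝒜 := (Bsub r Φ).val.comp eqv.symm.toAlgHom
  have hπσ : π.comp σ = AlgHom.id K A := by
    ext a
    show π ((eqv.symm a : Bsub r Φ) : 𝒜) = a
    exact eqv.apply_symm_apply a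
  have hπσ' : ∀ a : A, π (σ a) = a := fun a => congrArg (fun g => g a) hπσ
  have hσφ : σ.comp φ = PhiK r Φ := by
    apply AlgHom.ext
    intro f
    have hmem : PhiK r Φ f ∈ Bsub r Φ := ⟨f, rfl⟩
    have h5 : eqv.symm (φ f) = ⟨PhiK r Φ f, hmem⟩ := by
      rw [AlgEquiv.symm_apply_eq]
      show φ f = π (PhiK r Φ f)
      rw [← AlgHom.comp_apply, hred]
    show ((eqv.symm (φ f) : Bsub r Φ) : 𝒜) = PhiK r Φ f
    rw [h5]
  have hσφ' : ∀ f, σ (φ f) = PhiK r Φ f := fun f => congrArg (fun g => g f) hσφ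
  refine ⟨σ, hπσ, hσφ, ?_, ?_⟩
  · -- injectivity
    rw [injective_iff_map_eq_zero]
    have hdec : ∀ z : A ⊗[K] DualNumber K,
        ∃ a₀ a₁ : A, z = a₀ ⊗ₜ[K] (1 : DualNumber K) + a₁ ⊗ₜ[K] DualNumber.eps := by
      intro z
      induction z using TensorProduct.induction_on with
      | zero => exact ⟨0, 0, by simp⟩
      | tmul a d =>
          refine ⟨d.fst • a, d.snd • a, ?_⟩
          have hd : d = d.fst • (1 : DualNumber K) + d.snd • DualNumber.eps := by
            ext
            · simp
            · simp
          conv_lhs => rw [hd]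
          rw [TensorProduct.tmul_add, ← TensorProduct.smul_tmul, ← TensorProduct.smul_tmul]
      | add x y hx hy =>
          obtain ⟨a₀, a₁, h₀⟩ := hx
          obtain ⟨b₀, b₁, h₁⟩ := hy
          refine ⟨a₀ + b₀, a₁ + b₁, ?_⟩
          rw [h₀, h₁, TensorProduct.add_tmul, TensorProduct.add_tmul]
          abel
    intro z hz
    obtain ⟨a₀, a₁, rfl⟩ := hdec z
    have hτz : σ a₀ + σ a₁ * algebraMap (DualNumber K) 𝒜 DualNumber.eps = 0 := by
      rw [map_add, Algebra.TensorProduct.productMap_apply_tmul,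
        Algebra.TensorProduct.productMap_apply_tmul] at hz
      simpa [Algebra.ofId_apply] using hz
    have ha₀ : a₀ = 0 := by
      have h6 := congrArg π hτz
      rw [map_add, map_mul, hπeps, mul_zero, add_zero, map_zero, hπσ'] at h6
      exact h6
    have hsmul0 : (DualNumber.eps : DualNumber K) • σ a₁ = 0 := by
      rw [Algebra.smul_def, mul_comm]
      rw [ha₀, map_zero, zero_add] at hτz
      exact hτz
    obtain ⟨y, hy⟩ := eps_torsion' _ hsmul0
    have ha₁ : a₁ = 0 := by
      have h7 : π (σ a₁) = 0 := by rw [hy, hπsmul]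
      rwa [hπσ'] at h7
    rw [ha₀, ha₁, TensorProduct.zero_tmul, TensorProduct.zero_tmul, add_zero]
  · -- surjectivity
    intro x
    obtain ⟨f, rfl⟩ := hΦ x
    have h : Φ f ∈ (Algebra.TensorProduct.productMap σ
        ((Algebra.ofId (DualNumber K) 𝒜).restrictScalars K)).range := by
      induction f using MvPolynomial.induction_on with
      | C d =>
          rw [AlgHom.mem_range]
          refine ⟨(1 : A) ⊗ₜ[K] d, ?_⟩
          rw [Algebra.TensorProduct.productMap_apply_tmul, map_one, one_mul]
          show algebraMap (DualNumber K) 𝒜 d = Φ (C d)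
          rw [show (C d : MvPolynomial (Fin r) (DualNumber K)) =
            algebraMap (DualNumber K) (MvPolynomial (Fin r) (DualNumber K)) d from rfl,
            AlgHom.commutes]
      | add p q hp hq =>
          rw [map_add]; exact add_mem hp hq
      | mul_X p i hp =>
          rw [map_mul]
          refine mul_mem hp ?_
          rw [AlgHom.mem_range]
          refine ⟨φ (X i) ⊗ₜ[K] (1 : DualNumber K), ?_⟩
          rw [Algebra.TensorProduct.productMap_apply_tmul, map_one, mul_one, hσφ']
          show Φ (MvPolynomial.map (algebraMap K (DualNumber K)) (X i)) = Φ (X i)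
          rw [MvPolynomial.map_X]
    rw [AlgHom.mem_range] at h
    exact h


end
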